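/- Let ∇ ⊂ ℝ⁴ be defined by z,w ≥ 0, 1-z-w ≥ 0, x,y ≥ 0, z+w-x ≥ 0, x+y-w ≥ 0, 1-x-y ≥ 0. For every positive integer n, the number of lattice points in n∇ equals C(n+4,4) + 2·C(n+3,4) + C(n+2,4) = (4n⁴ + 24n³ + 56n² + 60n + 24)/24. -/

import Mathlib

open Pointwise

def nabla : Set (ℝ × ℝ × ℝ × ℝ) :=
  {p : ℝ × ℝ × ℝ × ℝ |
    0 ≤ p.2.2.1 ∧
    0 ≤ p.2.2.2 ∧
    0 ≤ 1 - p.2.2.1 - p.2.2.2 ∧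
    0 ≤ p.1 ∧
    0 ≤ p.2.1 ∧
    0 ≤ p.2.2.1 + p.2.2.2 - p.1 ∧
    0 ≤ p.1 + p.2.1 - p.2.2.2 ∧
    0 ≤ 1 - p.1 - p.2.1}

/-
Write `s = z + w` and `t = x + y`. The defining inequalities of `n∇` then say exactly that
`s, t ∈ [0, n]` and `x, w ∈ [0, min s t]`, so `(s, t, x, w)` parametrizes the lattice points of
`n∇` bijectively and their number is `∑_{s, t ≤ n} (min s t + 1)²`, a quartic in `n` obtained by
peeling off the last row and column of the `(n + 1) × (n + 1)` grid.
-/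

open Finset

lemma cast_choose_four_mul (k : ℕ) :
    (k.choose 4 : ℚ) * 24 = k * (k - 1) * (k - 2) * (k - 3) := by
  rw [show (24 : ℚ) = (Nat.factorial 4 : ℕ) by rfl, ← Nat.cast_mul, mul_comm,
    ← Nat.descFactorial_eq_factorial_mul_choose, ← descPochhammer_eval_eq_descFactorial]
  simp [descPochhammer_succ_right]

lemma cast_choose_sum_eq (n : ℕ) :
    ((Nat.choose (n + 4) 4 + 2 * Nat.choose (n + 3) 4 + Nat.choose (n + 2) 4 : ℚ)) =
      (4 * (n : ℚ) ^ 4 + 24 * (n : ℚ) ^ 3 + 56 * (n : ℚ) ^ 2 + 60 * n + 24) / 24 := by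
  have h4 := cast_choose_four_mul (n + 4)
  have h3 := cast_choose_four_mul (n + 3)
  have h2 := cast_choose_four_mul (n + 2)
  push_cast at h4 h3 h2
  linear_combination (h4 + 2 * h3 + h2) / 24

lemma mem_smul_nabla_iff {t : ℝ} (ht : 0 < t) (x y z w : ℝ) :
    (x, y, z, w) ∈ t • nabla ↔
      0 ≤ z ∧ 0 ≤ w ∧ 0 ≤ t - z - w ∧ 0 ≤ x ∧ 0 ≤ y ∧
        0 ≤ z + w - x ∧ 0 ≤ x + y - w ∧ 0 ≤ t - x - y := by
  have homogenize (a b : ℝ) : 1 - t⁻¹ * a - t⁻¹ * b = t⁻¹ * (t - a - b) := by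
    field_simp
  have homogenize' (a b c : ℝ) : t⁻¹ * a + t⁻¹ * b - t⁻¹ * c = t⁻¹ * (a + b - c) := by
    ring
  rw [Set.mem_smul_set_iff_inv_smul_mem₀ ht.ne']
  simp only [nabla, Set.mem_ofPred_eq, Prod.smul_mk, smul_eq_mul, homogenize, homogenize',
    mul_nonneg_iff_of_pos_left (inv_pos.2 ht)]

def nablaParams (n : ℕ) : Finset (Σ _ : ℕ × ℕ, ℕ × ℕ) :=
  (range (n + 1) ×ˢ range (n + 1)).sigma fun st =>
    range (min st.1 st.2 + 1) ×ˢ range (min st.1 st.2 + 1)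

def nablaPoint (p : Σ _ : ℕ × ℕ, ℕ × ℕ) : ℤ × ℤ × ℤ × ℤ :=
  (p.2.1, p.1.2 - p.2.1, p.1.1 - p.2.2, p.2.2)

lemma nablaPoint_injective : Function.Injective nablaPoint := by
  rintro ⟨⟨s, t⟩, ⟨x, w⟩⟩ ⟨⟨s', t'⟩, ⟨x', w'⟩⟩ h
  simp only [nablaPoint, Prod.mk.injEq] at h
  obtain ⟨hx, ht, hs, hw⟩ := h
  obtain rfl : x = x' := by omega
  obtain rfl : w = w' := by omega
  obtain rfl : t = t' := by omega
  obtain rfl : s = s' := by omega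
  rfl

lemma card_nablaParams (n : ℕ) :
    #(nablaParams n) = ∑ s ∈ range (n + 1), ∑ t ∈ range (n + 1), (min s t + 1) ^ 2 := by
  simp [nablaParams, card_sigma, sum_product, sq]

lemma six_mul_sum_range_succ_sq (m : ℕ) :
    6 * ∑ i ∈ range m, (i + 1) ^ 2 = m * (m + 1) * (2 * m + 1) := by
  induction m with
  | zero => rfl
  | succ m ih => rw [sum_range_succ, mul_add, ih]; ring

lemma twentyfour_mul_sum_min_sq (n : ℕ) :
    24 * ∑ s ∈ range (n + 1), ∑ t ∈ range (n + 1), (min s t + 1) ^ 2 =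
      4 * n ^ 4 + 24 * n ^ 3 + 56 * n ^ 2 + 60 * n + 24 := by
  induction n with
  | zero => rfl
  | succ n ih =>
    have hrow : ∑ s ∈ range (n + 1), (min s (n + 1) + 1) ^ 2 = ∑ s ∈ range (n + 1), (s + 1) ^ 2 :=
      sum_congr rfl fun s hs => by rw [min_eq_left (mem_range.1 hs).le]
    have hcol : ∑ t ∈ range (n + 1), (min (n + 1) t + 1) ^ 2 = ∑ t ∈ range (n + 1), (t + 1) ^ 2 :=
      sum_congr rfl fun t ht => by rw [min_eq_right (mem_range.1 ht).le]
    have hsq := six_mul_sum_range_succ_sq (n + 1)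
    simp only [sum_range_succ (n := n + 1), sum_add_distrib, hrow, hcol, min_self] at ih ⊢
    linarith

lemma latticePoints_smul_nabla_eq {n : ℕ} (hn : 0 < n) :
    {v : ℤ × ℤ × ℤ × ℤ | (((v.1 : ℝ), (v.2.1 : ℝ), (v.2.2.1 : ℝ), (v.2.2.2 : ℝ)) : ℝ × ℝ × ℝ × ℝ) ∈
        (n : ℝ) • nabla} = nablaPoint '' (nablaParams n : Set (Σ _ : ℕ × ℕ, ℕ × ℕ)) := by
  ext ⟨a, b, c, d⟩
  have hmem := mem_smul_nabla_iff (Nat.cast_pos.2 hn) a b c d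
  norm_cast at hmem
  simp only [Set.mem_ofPred_eq, hmem, Set.mem_image, mem_coe, nablaParams, mem_sigma, mem_product,
    mem_range, nablaPoint, Prod.mk.injEq]
  constructor
  · rintro ⟨hc, hd, hcd, ha, hb, hacd, habd, hab⟩
    exact ⟨⟨((c + d).toNat, (a + b).toNat), (a.toNat, d.toNat)⟩, by simp only; omega⟩
  · rintro ⟨⟨⟨s, t⟩, ⟨x, w⟩⟩, hp, rfl, rfl, rfl, rfl⟩
    simp only at hp ⊢
    omega

theorem stmt14 (n : ℕ) (hn : 0 < n) :
    {v : ℤ × ℤ × ℤ × ℤ | (((v.1 : ℝ), (v.2.1 : ℝ), (v.2.2.1 : ℝ), (v.2.2.2 : ℝ)) : ℝ × ℝ × ℝ × ℝ) ∈ (n : ℝ) • nabla}.ncard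
        = Nat.choose (n + 4) 4 + 2 * Nat.choose (n + 3) 4 + Nat.choose (n + 2) 4 ∧
      ((Nat.choose (n + 4) 4 + 2 * Nat.choose (n + 3) 4 + Nat.choose (n + 2) 4 : ℚ))
        = (4 * (n : ℚ) ^ 4 + 24 * (n : ℚ) ^ 3 + 56 * (n : ℚ) ^ 2 + 60 * (n : ℚ) ^ 1 + 24) / 24 := by
  refine ⟨?_, by rw [pow_one]; exact cast_choose_sum_eq n⟩
  rw [latticePoints_smul_nabla_eq hn, Set.ncard_image_of_injective _ nablaPoint_injective,
    Set.ncard_coe_finset, card_nablaParams]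
  have hcount := twentyfour_mul_sum_min_sq n
  qify at hcount ⊢
  rw [cast_choose_sum_eq]
  linear_combination hcount / 24
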